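/- For every p > 0, sup_{x ∈ ℝ} | Φ(p x) − Φ(x) | ≤ (2πe)^{−1/2} · [ (p − 1)·I(p ≥ 1) + (1/p − 1)·I(0 < p < 1) ] ≤ (2πe)^{−1/2} · | p − 1/p |. -/

import Mathlib

open MeasureTheory ProbabilityTheory Filter Real Set

noncomputable section

/-- Covariance of two real-valued random variables. -/
def covRV {Ω : Type*} [MeasurableSpace Ω] (μ : Measure Ω) (f g : Ω → ℝ) : ℝ :=
  (∫ ω, f ω * g ω ∂μ) - (∫ ω, f ω ∂μ) * (∫ ω, g ω ∂μ)

/-- Variance of a real-valued random variable. -/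
def varRV {Ω : Type*} [MeasurableSpace Ω] (μ : Measure Ω) (f : Ω → ℝ) : ℝ :=
  covRV μ f f

/-- The sequence `X` is associated: every finite subcollection has nonnegative covariance
between coordinatewise nondecreasing functions (whenever it is defined). -/
def IsAssociated {Ω : Type*} [MeasurableSpace Ω] (μ : Measure Ω) (X : ℕ → Ω → ℝ) : Prop :=
  ∀ (n : ℕ) (idx : Fin n → ℕ) (g h : (Fin n → ℝ) → ℝ),
    Monotone g → Monotone h →
    Integrable (fun ω => g fun i => X (idx i) ω) μ →
    Integrable (fun ω => h fun i => X (idx i) ω) μ →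
    Integrable (fun ω => g (fun i => X (idx i) ω) * h (fun i => X (idx i) ω)) μ →
    0 ≤ covRV μ (fun ω => g fun i => X (idx i) ω) (fun ω => h fun i => X (idx i) ω)

/-- Strict stationarity of the sequence `X`. -/
def IsStationarySeq {Ω : Type*} [MeasurableSpace Ω] (μ : Measure Ω) (X : ℕ → Ω → ℝ) : Prop :=
  ∀ k : ℕ, Measure.map (fun ω (i : ℕ) => X (i + k) ω) μ
      = Measure.map (fun ω (i : ℕ) => X i ω) μ

/-- Indicator of the event `X i ≤ x`, as a real random variable. -/
def indLE {Ω : Type*} (X : ℕ → Ω → ℝ) (i : ℕ) (x : ℝ) (ω : Ω) : ℝ :=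
  if X i ω ≤ x then 1 else 0

/-- Generalized inverse (quantile function) `F⁻¹(p) = inf {x : F x ≥ p}`. -/
def genQuantile (F : ℝ → ℝ) (p : ℝ) : ℝ := sInf {x : ℝ | p ≤ F x}

/-- Empirical distribution function of `X_1, …, X_n`. -/
def empCDF {Ω : Type*} (X : ℕ → Ω → ℝ) (n : ℕ) (x : ℝ) (ω : Ω) : ℝ :=
  (n : ℝ)⁻¹ * ∑ i ∈ Finset.Icc 1 n, indLE X i x ω

/-- Sample `p`-th quantile `F_n⁻¹(p)`. -/
def sampleQuantile {Ω : Type*} (X : ℕ → Ω → ℝ) (n : ℕ) (p : ℝ) (ω : Ω) : ℝ :=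
  sInf {x : ℝ | p ≤ empCDF X n x ω}

/-- `σ²(x) = Var(I(X₁ ≤ x)) + 2 ∑_{j=2}^∞ Cov(I(X₁ ≤ x), I(X_j ≤ x))`. -/
def sigmaSq {Ω : Type*} [MeasurableSpace Ω] (μ : Measure Ω) (X : ℕ → Ω → ℝ) (x : ℝ) : ℝ :=
  varRV μ (indLE X 1 x) + 2 * ∑' j : ℕ, covRV μ (indLE X 1 x) (indLE X (j + 2) x)

/-- Standard normal distribution function `Φ`. -/
def stdGaussCDF (x : ℝ) : ℝ := ((gaussianReal 0 1) (Iic x)).toReal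

/-- `Y_i(t) = I(X_i ≤ x_p + t a_p n^{-1/2}) - E[I(X_i ≤ x_p + t a_p n^{-1/2})]`. -/
def Ystat {Ω : Type*} [MeasurableSpace Ω] (μ : Measure Ω) (X : ℕ → Ω → ℝ)
    (xp ap : ℝ) (n : ℕ) (t : ℝ) (i : ℕ) (ω : Ω) : ℝ :=
  indLE X i (xp + t * ap * (n : ℝ) ^ (-(1/2) : ℝ)) ω
    - ∫ ω', indLE X i (xp + t * ap * (n : ℝ) ^ (-(1/2) : ℝ)) ω' ∂μ

/-- `σ²_{(n,t)} = Var(Y₁(t)) + 2 ∑_{j=2}^∞ Cov(Y₁(t), Y_j(t))`. -/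
def sigmaSqNT {Ω : Type*} [MeasurableSpace Ω] (μ : Measure Ω) (X : ℕ → Ω → ℝ)
    (xp ap : ℝ) (n : ℕ) (t : ℝ) : ℝ :=
  varRV μ (Ystat μ X xp ap n t 1)
    + 2 * ∑' j : ℕ, covRV μ (Ystat μ X xp ap n t 1) (Ystat μ X xp ap n t (j + 2))

/-!
Writing `Φ(q x) - Φ(x)` as the integral of the density `φ` between `x` and `q x`, and bounding
`φ` there by `φ(x)` (the interval lies farther from the origin than `x` when `q ≥ 1`), gives
`|Φ(q x) - Φ(x)| ≤ (q - 1) |x| φ(x)`. The function `t ↦ t e^{-t²/2}` peaks at `t = 1`, so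
`|x| φ(x) ≤ φ(1) = (2πe)^{-1/2}`. The case `p < 1` follows by applying this with `q = 1/p`
at the point `p x`.
-/

lemma mul_exp_neg_sq_div_two_le (t : ℝ) : t * exp (-t ^ 2 / 2) ≤ exp (-(1 / 2)) := by
  have h : t ≤ exp ((t ^ 2 - 1) / 2) := by
    nlinarith [add_one_le_exp ((t ^ 2 - 1) / 2), sq_nonneg (t - 1)]
  calc t * exp (-t ^ 2 / 2) ≤ exp ((t ^ 2 - 1) / 2) * exp (-t ^ 2 / 2) := by gcongr
    _ = exp (-(1 / 2)) := by rw [← exp_add]; ring_nf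

lemma gaussianPDFReal_le_of_sq_le {μ : ℝ} {v : NNReal} {x u : ℝ}
    (h : (x - μ) ^ 2 ≤ (u - μ) ^ 2) : gaussianPDFReal μ v u ≤ gaussianPDFReal μ v x := by
  simp only [gaussianPDFReal]
  gcongr

lemma gaussianPDFReal_zero_one_one :
    gaussianPDFReal 0 1 1 = (2 * π * exp 1) ^ (-(1 / 2) : ℝ) := by
  have h2π : (0 : ℝ) ≤ 2 * π := by positivity
  rw [gaussianPDFReal, mul_rpow h2π (exp_pos 1).le, exp_one_rpow, rpow_neg h2π,
    ← sqrt_eq_rpow]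
  norm_num

lemma abs_mul_gaussianPDFReal_le (x : ℝ) :
    |x| * gaussianPDFReal 0 1 x ≤ gaussianPDFReal 0 1 1 := by
  simp only [gaussianPDFReal, NNReal.coe_one, mul_one, sub_zero, one_pow, ← sq_abs x]
  calc |x| * ((√(2 * π))⁻¹ * exp (-|x| ^ 2 / 2))
      = (√(2 * π))⁻¹ * (|x| * exp (-|x| ^ 2 / 2)) := by ring
    _ ≤ (√(2 * π))⁻¹ * exp (-1 / 2) := by
      gcongr
      exact (mul_exp_neg_sq_div_two_le |x|).trans_eq (by norm_num)

lemma stdGaussCDF_eq_integral (x : ℝ) :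
    stdGaussCDF x = ∫ u in Iic x, gaussianPDFReal 0 1 u := by
  rw [stdGaussCDF, gaussianReal_apply_eq_integral 0 one_ne_zero, ENNReal.toReal_ofReal]
  exact setIntegral_nonneg measurableSet_Iic fun u _ => gaussianPDFReal_nonneg 0 1 u

lemma stdGaussCDF_sub_stdGaussCDF (a b : ℝ) :
    stdGaussCDF b - stdGaussCDF a = ∫ u in a..b, gaussianPDFReal 0 1 u := by
  rw [stdGaussCDF_eq_integral, stdGaussCDF_eq_integral]
  exact intervalIntegral.integral_Iic_sub_Iic
    (integrable_gaussianPDFReal 0 1).integrableOn (integrable_gaussianPDFReal 0 1).integrableOn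

lemma abs_stdGaussCDF_mul_sub_le {q : ℝ} (hq : 1 ≤ q) (x : ℝ) :
    |stdGaussCDF (q * x) - stdGaussCDF x| ≤ (2 * π * exp 1) ^ (-(1 / 2) : ℝ) * (q - 1) := by
  have hφ : ∀ u ∈ uIoc x (q * x), ‖gaussianPDFReal 0 1 u‖ ≤ gaussianPDFReal 0 1 x := by
    intro u hu
    rw [Real.norm_of_nonneg (gaussianPDFReal_nonneg 0 1 u)]
    apply gaussianPDFReal_le_of_sq_le
    rcases le_total 0 x with hx | hx
    · rw [uIoc_of_le (by nlinarith)] at hu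
      nlinarith [hu.1, hu.2]
    · rw [uIoc_of_ge (by nlinarith)] at hu
      nlinarith [hu.1, hu.2]
  calc |stdGaussCDF (q * x) - stdGaussCDF x|
      ≤ gaussianPDFReal 0 1 x * |q * x - x| := by
        rw [stdGaussCDF_sub_stdGaussCDF, ← Real.norm_eq_abs]
        exact intervalIntegral.norm_integral_le_of_norm_le_const hφ
    _ = (q - 1) * (|x| * gaussianPDFReal 0 1 x) := by
        rw [← sub_one_mul, abs_mul, abs_of_nonneg (by linarith : 0 ≤ q - 1)]; ring
    _ ≤ (q - 1) * gaussianPDFReal 0 1 1 :=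
        mul_le_mul_of_nonneg_left (abs_mul_gaussianPDFReal_le x) (by linarith)
    _ = (2 * π * exp 1) ^ (-(1 / 2) : ℝ) * (q - 1) := by
        rw [gaussianPDFReal_zero_one_one, mul_comm]

theorem stmt13_gaussian_cdf_scaling (p : ℝ) (hp : 0 < p) :
    (∀ x : ℝ, |stdGaussCDF (p * x) - stdGaussCDF x|
        ≤ (2 * Real.pi * Real.exp 1) ^ (-(1/2) : ℝ) *
          ((p - 1) * (if 1 ≤ p then (1:ℝ) else 0) + (1 / p - 1) * (if p < 1 then (1:ℝ) else 0)))
    ∧ (2 * Real.pi * Real.exp 1) ^ (-(1/2) : ℝ) *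
          ((p - 1) * (if 1 ≤ p then (1:ℝ) else 0) + (1 / p - 1) * (if p < 1 then (1:ℝ) else 0))
        ≤ (2 * Real.pi * Real.exp 1) ^ (-(1/2) : ℝ) * |p - 1 / p| := by
  have hC : (0 : ℝ) ≤ (2 * π * exp 1) ^ (-(1 / 2) : ℝ) := rpow_nonneg (by positivity) _
  rcases le_or_gt 1 p with hp1 | hp1
  · simp only [if_pos hp1, if_neg hp1.not_gt, mul_one, mul_zero, add_zero]
    have hinv : 1 / p ≤ 1 := by rwa [div_le_one hp]
    refine ⟨abs_stdGaussCDF_mul_sub_le hp1, mul_le_mul_of_nonneg_left ?_ hC⟩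
    exact (by linarith : p - 1 ≤ p - 1 / p).trans (le_abs_self _)
  · simp only [if_neg hp1.not_ge, if_pos hp1, mul_one, mul_zero, zero_add]
    have hinv : 1 ≤ 1 / p := by rw [le_div_iff₀ hp]; linarith
    refine ⟨fun x => ?_, mul_le_mul_of_nonneg_left ?_ hC⟩
    · have h := abs_stdGaussCDF_mul_sub_le hinv (p * x)
      rwa [one_div, inv_mul_cancel_left₀ hp.ne', abs_sub_comm, ← one_div] at h
    · rw [abs_sub_comm]
      exact (by linarith : 1 / p - 1 ≤ 1 / p - p).trans (le_abs_self _)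

end
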